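/- arXiv:1303.1399 — 2 statements merged into one kernel-verified Lean document; each statement's English description precedes it below -/
import Mathlib

section
/- Weak compositionality, backward direction: for nets N : k→l and M : l→m, if N has a weak transition X ==α/γ==> X' and M has a weak transition Y ==γ/β==> Y' for some γ ∈ {0,1}^l, then the composite N;M has a weak transition (X ⊎ Y) ==α/β==> (X' ⊎ Y'). -/
/-- A net with boundaries `N : k → l` with places `P` and transitions `T`. -/
structure Net (P : Type) (T : Type) (k l : ℕ) where
  pre : T → Set P
  post : T → Set P
  src : T → Set (Fin k)
  tgt : T → Set (Fin l)

namespace Net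

variable {P Q R : Type} {T₁ T₂ T₃ : Type} {k l m n : ℕ}

/-- Distinct transitions have disjoint boundary connections. -/
def BoundaryInj (N : Net P T₁ k l) : Prop :=
  ∀ t t' : T₁, t ≠ t' → N.src t ∩ N.src t' = ∅ ∧ N.tgt t ∩ N.tgt t' = ∅

def preSet (N : Net P T₁ k l) (U : Set T₁) : Set P := ⋃ t ∈ U, N.pre t
def postSet (N : Net P T₁ k l) (U : Set T₁) : Set P := ⋃ t ∈ U, N.post t
def srcSet (N : Net P T₁ k l) (U : Set T₁) : Set (Fin k) := ⋃ t ∈ U, N.src t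
def tgtSet (N : Net P T₁ k l) (U : Set T₁) : Set (Fin l) := ⋃ t ∈ U, N.tgt t

/-- Mutual independence of a set of transitions. -/
def MI (N : Net P T₁ k l) (U : Set T₁) : Prop :=
  ∀ t ∈ U, ∀ t' ∈ U, t ≠ t' →
    (N.pre t ∪ N.post t) ∩ (N.pre t' ∪ N.post t') = ∅

/-- The (1-bounded) step transition relation on markings. -/
def Step (N : Net P T₁ k l) (X : Set P) (α : Set (Fin k)) (β : Set (Fin l))
    (X' : Set P) : Prop :=
  ∃ U : Set T₁, N.MI U ∧ N.preSet U ⊆ X ∧ N.postSet U ∩ X = ∅ ∧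
    X' = (X \ N.preSet U) ∪ N.postSet U ∧ N.srcSet U = α ∧ N.tgtSet U = β

/-- A synchronisation between `N : k → l` and `M : l → m`. -/
def Sync (N : Net P T₁ k l) (M : Net Q T₂ l m) (U : Set T₁) (V : Set T₂) : Prop :=
  N.MI U ∧ M.MI V ∧ N.tgtSet U = M.srcSet V

/-- A minimal synchronisation: non-trivial, and any synchronisation below it is
trivial (or the synchronisation itself). -/
def MinSync (N : Net P T₁ k l) (M : Net Q T₂ l m) (U : Set T₁) (V : Set T₂) : Prop :=
  Sync N M U V ∧ ¬(U = ∅ ∧ V = ∅) ∧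
    ∀ U' V', U' ⊆ U → V' ⊆ V → Sync N M U' V' →
      (U' = ∅ ∧ V' = ∅) ∨ (U' = U ∧ V' = V)

/-- Independence of two synchronisations: unions componentwise MI, and disjoint. -/
def IndepSync (N : Net P T₁ k l) (M : Net Q T₂ l m)
    (s s' : Set T₁ × Set T₂) : Prop :=
  N.MI (s.1 ∪ s'.1) ∧ M.MI (s.2 ∪ s'.2) ∧ s.1 ∩ s'.1 = ∅ ∧ s.2 ∩ s'.2 = ∅

/-- Composition `N ; M` of nets along a common boundary. -/
def comp (N : Net P T₁ k l) (M : Net Q T₂ l m) :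
    Net (P ⊕ Q) {s : Set T₁ × Set T₂ // MinSync N M s.1 s.2} k m where
  pre s := Sum.inl '' N.preSet s.1.1 ∪ Sum.inr '' M.preSet s.1.2
  post s := Sum.inl '' N.postSet s.1.1 ∪ Sum.inr '' M.postSet s.1.2
  src s := N.srcSet s.1.1
  tgt s := M.tgtSet s.1.2

/-- Tensor (parallel composition) of nets. -/
def tensor (M : Net P T₁ k l) (N : Net Q T₂ m n) :
    Net (P ⊕ Q) (T₁ ⊕ T₂) (k + m) (l + n) where
  pre := Sum.elim (fun t => Sum.inl '' M.pre t) (fun t => Sum.inr '' N.pre t)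
  post := Sum.elim (fun t => Sum.inl '' M.post t) (fun t => Sum.inr '' N.post t)
  src := Sum.elim (fun t => Fin.castAdd m '' M.src t) (fun t => Fin.natAdd k '' N.src t)
  tgt := Sum.elim (fun t => Fin.castAdd n '' M.tgt t) (fun t => Fin.natAdd l '' N.tgt t)

/-- Disjoint union of markings. -/
def mU (X : Set P) (Y : Set Q) : Set (P ⊕ Q) := Sum.inl '' X ∪ Sum.inr '' Y

/-- Traces: sequences of consecutive step transitions, recorded by their labels. -/
def Trace (N : Net P T₁ k l) :
    Set P → List (Set (Fin k) × Set (Fin l)) → Set P → Prop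
  | X, [], X' => X = X'
  | X, ab :: w, X' => ∃ X'', N.Step X ab.1 ab.2 X'' ∧ N.Trace X'' w X'

/-- Epsilon (internal) steps. -/
def EpsStep (N : Net P T₁ k l) (X X' : Set P) : Prop := N.Step X ∅ ∅ X'

/-- The weak transition relation. -/
def Weak (N : Net P T₁ k l) (X : Set P) (α : Set (Fin k)) (β : Set (Fin l))
    (X' : Set P) : Prop :=
  ∃ X'' X''', Relation.ReflTransGen N.EpsStep X X'' ∧ N.Step X'' α β X''' ∧
    Relation.ReflTransGen N.EpsStep X''' X'

end Net

/-- An NFA with boundaries `A : k → l`: alphabet `{0,1}^k × {0,1}^l`. -/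
structure BNFA (S : Type) (k l : ℕ) where
  step : S → Set (Fin k) × Set (Fin l) → S → Prop
  start : Set S
  accept : Set S

namespace BNFA

variable {S S' S'' : Type} {k l m n : ℕ}

def Run (A : BNFA S k l) : S → List (Set (Fin k) × Set (Fin l)) → S → Prop
  | s, [], s' => s = s'
  | s, a :: w, s' => ∃ s₁, A.step s a s₁ ∧ A.Run s₁ w s'

def Lang (A : BNFA S k l) : Set (List (Set (Fin k) × Set (Fin l))) :=
  {w | ∃ s ∈ A.start, ∃ s' ∈ A.accept, A.Run s w s'}

/-- Sequential composition of NFAs with boundaries (synchronising product). -/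
def comp (A : BNFA S k l) (B : BNFA S' l m) : BNFA (S × S') k m where
  step p a q := ∃ γ, A.step p.1 (a.1, γ) q.1 ∧ B.step p.2 (γ, a.2) q.2
  start := {p | p.1 ∈ A.start ∧ p.2 ∈ B.start}
  accept := {p | p.1 ∈ A.accept ∧ p.2 ∈ B.accept}

/-- Tensor of NFAs with boundaries. -/
def tensor (A : BNFA S k l) (B : BNFA S' m n) : BNFA (S × S') (k + m) (l + n) where
  step p a q :=
    A.step p.1 (Fin.castAdd m ⁻¹' a.1, Fin.castAdd n ⁻¹' a.2) q.1 ∧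
    B.step p.2 (Fin.natAdd k ⁻¹' a.1, Fin.natAdd l ⁻¹' a.2) q.2
  start := {p | p.1 ∈ A.start ∧ p.2 ∈ B.start}
  accept := {p | p.1 ∈ A.accept ∧ p.2 ∈ B.accept}

/-- Isomorphism of NFAs with boundaries. -/
def Iso (A : BNFA S k l) (B : BNFA S' k l) : Prop :=
  ∃ e : S ≃ S', (∀ s a s', A.step s a s' ↔ B.step (e s) a (e s')) ∧
    (∀ s, s ∈ A.start ↔ e s ∈ B.start) ∧ (∀ s, s ∈ A.accept ↔ e s ∈ B.accept)

/-- Epsilon transitions of an NFA with boundaries. -/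
def EpsA (A : BNFA S k l) (s s' : S) : Prop := A.step s (∅, ∅) s'

/-- Epsilon closure of an NFA with boundaries. -/
def epsClose (A : BNFA S k l) : BNFA S k l where
  step s a s' := ∃ s₁ s₂, Relation.ReflTransGen A.EpsA s s₁ ∧ A.step s₁ a s₂ ∧
    Relation.ReflTransGen A.EpsA s₂ s'
  start := A.start
  accept := A.accept

end BNFA

/-- The step-semantics NFA of a net with boundaries, with given initial and
final sets of markings. -/
def netNFA {P T : Type} {k l : ℕ} (N : Net P T k l)
    (I F : Set (Set P)) : BNFA (Set P) k l where
  step X a X' := N.Step X a.1 a.2 X'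
  start := I
  accept := F

/-- A bundled NFA with boundaries. -/
structure BBNFA (k l : ℕ) where
  S : Type
  nfa : BNFA S k l

/-!
A step of `N` firing `U` and a step of `M` firing `V` that agree on the shared boundary form a
synchronisation `(U, V)`. Since distinct transitions have disjoint boundary ports, the sub-pairs of
`(U, V)` whose ports match are closed under arbitrary intersections and relative complements. Hence
the least such sub-pair containing a given transition is a minimal synchronisation, and distinct
minimal synchronisations are disjoint. So `(U, V)` splits into pairwise independent transitions of
`N ; M`, whose simultaneous firing is the composite step. Internal steps of either component lift
to `N ; M` by pairing them with the idle step of the other.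
-/

open Function

theorem Set.biUnion_biInter_of_pairwise_disjoint {ι κ α : Type*} {f : ι → Set α}
    (hf : Pairwise (Disjoint on f)) {J : Set κ} (hJ : J.Nonempty) (A : κ → Set ι) :
    ⋃ i ∈ ⋂ j ∈ J, A j, f i = ⋂ j ∈ J, ⋃ i ∈ A j, f i := by
  ext x
  simp only [Set.mem_iUnion, Set.mem_iInter, exists_prop]
  refine ⟨fun ⟨i, hi, hx⟩ j hj => ⟨i, hi j hj, hx⟩, fun h => ?_⟩
  obtain ⟨j₀, hj₀⟩ := hJ
  obtain ⟨i, -, hx⟩ := h j₀ hj₀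
  refine ⟨i, fun j hj => ?_, hx⟩
  obtain ⟨i', hi', hx'⟩ := h j hj
  obtain rfl : i' = i := by_contra fun hne => Set.disjoint_left.1 (hf hne) hx' hx
  exact hi'

/-- A nonzero `p`-element `s` below the infimum cannot miss `a`: otherwise the difference of the
infimum and `s` would be a smaller `p`-element above `a`. -/
theorem minimal_sInf_of_forall_le_or_disjoint {α : Type*} [CompleteBooleanAlgebra α]
    {p : α → Prop} (hinf : ∀ F : Set α, F.Nonempty → (∀ s ∈ F, p s) → p (sInf F))
    (hsdiff : ∀ s t, p s → p t → p (s \ t)) {a : α} (ha : a ≠ ⊥)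
    (hsplit : ∀ s, a ≤ s ∨ Disjoint a s) (hF : ∃ s, p s ∧ a ≤ s) :
    Minimal (fun s => p s ∧ s ≠ ⊥) (sInf {s | p s ∧ a ≤ s}) := by
  set c := sInf {s | p s ∧ a ≤ s}
  have hac : a ≤ c := le_sInf fun s hs => hs.2
  have hc : p c := hinf _ hF fun s hs => hs.1
  refine ⟨⟨hc, ne_bot_of_le_ne_bot ha hac⟩, fun s ⟨hs, hs0⟩ hsc => ?_⟩
  rcases hsplit s with has | has
  · exact sInf_le ⟨hs, has⟩
  · have hcs : c ≤ c \ s := sInf_le ⟨hsdiff c s hc hs, le_sdiff.2 ⟨hac, has⟩⟩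
    exact absurd (disjoint_self.1 (le_sdiff.1 (hsc.trans hcs)).2) hs0

namespace Net

variable {P Q T₁ T₂ : Type} {k l m : ℕ} {N : Net P T₁ k l} {M : Net Q T₂ l m}

theorem BoundaryInj.pairwise_disjoint_src (hN : N.BoundaryInj) : Pairwise (Disjoint on N.src) :=
  fun _ _ hne => Set.disjoint_iff_inter_eq_empty.2 (hN _ _ hne).1

theorem BoundaryInj.pairwise_disjoint_tgt (hN : N.BoundaryInj) : Pairwise (Disjoint on N.tgt) :=
  fun _ _ hne => Set.disjoint_iff_inter_eq_empty.2 (hN _ _ hne).2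

theorem step_empty (N : Net P T₁ k l) (X : Set P) : N.Step X ∅ ∅ X :=
  ⟨∅, by simp [MI], by simp [preSet], by simp [postSet], by simp [preSet, postSet],
    by simp [srcSet], by simp [tgtSet]⟩

theorem MI.mono {U U' : Set T₁} (hU : N.MI U) (h : U' ⊆ U) : N.MI U' :=
  fun t ht t' ht' hne => hU t (h ht) t' (h ht') hne

theorem preSet_union_postSet (A : Set T₁) :
    N.preSet A ∪ N.postSet A = ⋃ t ∈ A, (N.pre t ∪ N.post t) := by
  simp only [preSet, postSet, Set.iUnion_union_distrib]

theorem MI.disjoint_preSet_union_postSet {U A B : Set T₁} (hU : N.MI U) (hA : A ⊆ U)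
    (hB : B ⊆ U) (hAB : Disjoint A B) :
    Disjoint (N.preSet A ∪ N.postSet A) (N.preSet B ∪ N.postSet B) := by
  simp only [preSet_union_postSet, Set.disjoint_iUnion₂_left, Set.disjoint_iUnion₂_right]
  exact fun t' ht' t ht => Set.disjoint_iff_inter_eq_empty.2
    (hU t (hA ht) t' (hB ht') (hAB.ne_of_mem ht ht'))

theorem Sync.mono {U U' : Set T₁} {V V' : Set T₂} (hs : Sync N M U V) (hU : U' ⊆ U)
    (hV : V' ⊆ V) (h : N.tgtSet U' = M.srcSet V') : Sync N M U' V' :=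
  ⟨hs.1.mono hU, hs.2.1.mono hV, h⟩

theorem mU_union_mU (A C : Set P) (B D : Set Q) : mU A B ∪ mU C D = mU (A ∪ C) (B ∪ D) := by
  ext (p | q) <;> simp [mU]

theorem mU_sdiff_mU (A C : Set P) (B D : Set Q) : mU A B \ mU C D = mU (A \ C) (B \ D) := by
  ext (p | q) <;> simp [mU]

theorem mU_subset_mU {A C : Set P} {B D : Set Q} (hAC : A ⊆ C) (hBD : B ⊆ D) :
    mU A B ⊆ mU C D :=
  Set.union_subset_union (Set.image_mono hAC) (Set.image_mono hBD)

theorem disjoint_mU {A C : Set P} {B D : Set Q} :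
    Disjoint (mU A B) (mU C D) ↔ Disjoint A C ∧ Disjoint B D := by
  simp only [mU, Set.disjoint_union_left, Set.disjoint_union_right,
    Set.disjoint_image_iff Sum.inl_injective, Set.disjoint_image_iff Sum.inr_injective,
    Set.disjoint_image_inl_image_inr, Set.disjoint_image_inl_image_inr.symm, and_true, true_and]

theorem tgtSet_sInf_eq_srcSet (hN : N.BoundaryInj) (hM : M.BoundaryInj)
    {F : Set (Set T₁ × Set T₂)} (hF : F.Nonempty) (h : ∀ s ∈ F, N.tgtSet s.1 = M.srcSet s.2) :
    N.tgtSet (sInf F).1 = M.srcSet (sInf F).2 := by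
  simp only [Prod.fst_sInf, Prod.snd_sInf, sInf_image, Set.iInf_eq_iInter, tgtSet, srcSet]
  rw [Set.biUnion_biInter_of_pairwise_disjoint (BoundaryInj.pairwise_disjoint_tgt hN) hF,
    Set.biUnion_biInter_of_pairwise_disjoint (BoundaryInj.pairwise_disjoint_src hM) hF]
  exact Set.iInter₂_congr h

theorem tgtSet_sdiff_eq_srcSet (hN : N.BoundaryInj) (hM : M.BoundaryInj)
    {s t : Set T₁ × Set T₂} (hs : N.tgtSet s.1 = M.srcSet s.2)
    (ht : N.tgtSet t.1 = M.srcSet t.2) : N.tgtSet (s \ t).1 = M.srcSet (s \ t).2 := by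
  simp only [fst_sdiff, snd_sdiff, tgtSet, srcSet]
  rw [← Set.biUnion_sdiff_biUnion_eq ((BoundaryInj.pairwise_disjoint_tgt hN).set_pairwise _),
    ← Set.biUnion_sdiff_biUnion_eq ((BoundaryInj.pairwise_disjoint_src hM).set_pairwise _)]
  exact congrArg₂ (· \ ·) hs ht

theorem exists_minSync_le (hN : N.BoundaryInj) (hM : M.BoundaryInj) {S a : Set T₁ × Set T₂}
    (hS : Sync N M S.1 S.2) (ha : a ≠ ⊥) (hsplit : ∀ s, a ≤ s ∨ Disjoint a s) (haS : a ≤ S) :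
    ∃ w : Set T₁ × Set T₂, MinSync N M w.1 w.2 ∧ w ≤ S ∧ a ≤ w := by
  obtain ⟨⟨⟨hwS, hw⟩, hw0⟩, hwmin⟩ := minimal_sInf_of_forall_le_or_disjoint
    (p := fun s => s ≤ S ∧ N.tgtSet s.1 = M.srcSet s.2)
    (fun F hF hFp => ⟨sInf_le_of_le hF.some_mem (hFp _ hF.some_mem).1,
      tgtSet_sInf_eq_srcSet hN hM hF fun s hs => (hFp s hs).2⟩)
    (fun s t hs ht => ⟨sdiff_le.trans hs.1, tgtSet_sdiff_eq_srcSet hN hM hs.2 ht.2⟩)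
    ha hsplit ⟨S, ⟨le_rfl, hS.2.2⟩, haS⟩
  set w := sInf {s | (s ≤ S ∧ N.tgtSet s.1 = M.srcSet s.2) ∧ a ≤ s}
  refine ⟨w, ⟨hS.mono hwS.1 hwS.2 hw, fun h => hw0 (Prod.ext h.1 h.2),
    fun U' V' hU' hV' hs' => ?_⟩, hwS, le_sInf fun s hs => hs.2⟩
  by_cases h0 : U' = ∅ ∧ V' = ∅
  · exact Or.inl h0
  · have hle : w ≤ (U', V') :=
      hwmin ⟨⟨le_trans ⟨hU', hV'⟩ hwS, hs'.2.2⟩, fun h => h0 (Prod.ext_iff.1 h)⟩ ⟨hU', hV'⟩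
    exact Or.inr ⟨hU'.antisymm hle.1, hV'.antisymm hle.2⟩

theorem MinSync.eq_or_disjoint (hN : N.BoundaryInj) (hM : M.BoundaryInj)
    {s s' : Set T₁ × Set T₂} (hs : MinSync N M s.1 s.2) (hs' : MinSync N M s'.1 s'.2) :
    s = s' ∨ Disjoint s s' := by
  have hinf : Sync N M (s ⊓ s').1 (s ⊓ s').2 := by
    refine hs.1.mono Set.inter_subset_left Set.inter_subset_left ?_
    rw [← sInf_pair]
    exact tgtSet_sInf_eq_srcSet hN hM (Set.insert_nonempty _ _)
      (by rintro _ (rfl | rfl); exacts [hs.1.2.2, hs'.1.2.2])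
  have hdisj : (s ⊓ s').1 = ∅ ∧ (s ⊓ s').2 = ∅ → Disjoint s s' := by
    simp only [Prod.disjoint_iff, Set.disjoint_iff_inter_eq_empty]
    exact id
  rcases hs.2.2 _ _ Set.inter_subset_left Set.inter_subset_left hinf with h | h
  · exact Or.inr (hdisj h)
  rcases hs'.2.2 _ _ Set.inter_subset_right Set.inter_subset_right hinf with h' | h'
  · exact Or.inr (hdisj h')
  · exact Or.inl (Prod.ext (h.1.symm.trans h'.1) (h.2.symm.trans h'.2))

def minSyncsBelow (N : Net P T₁ k l) (M : Net Q T₂ l m) (S : Set T₁ × Set T₂) :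
    Set {s : Set T₁ × Set T₂ // MinSync N M s.1 s.2} :=
  {w | w.1 ≤ S}

theorem biUnion_minSyncsBelow_fst (hN : N.BoundaryInj) (hM : M.BoundaryInj)
    {S : Set T₁ × Set T₂} (hS : Sync N M S.1 S.2) : ⋃ w ∈ minSyncsBelow N M S, w.1.1 = S.1 := by
  refine subset_antisymm (Set.iUnion₂_subset fun w hw => hw.1) fun t ht => ?_
  obtain ⟨w, hw, hwS, htw⟩ := exists_minSync_le (a := ({t}, ∅)) hN hM hS
    (fun h => by simpa using congrArg Prod.fst h)
    (fun s => by by_cases h : t ∈ s.1 <;> simp [Prod.le_def, Prod.disjoint_iff, h])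
    ⟨Set.singleton_subset_iff.2 ht, Set.empty_subset _⟩
  exact Set.mem_biUnion (x := ⟨w, hw⟩) hwS (htw.1 rfl)

theorem biUnion_minSyncsBelow_snd (hN : N.BoundaryInj) (hM : M.BoundaryInj)
    {S : Set T₁ × Set T₂} (hS : Sync N M S.1 S.2) : ⋃ w ∈ minSyncsBelow N M S, w.1.2 = S.2 := by
  refine subset_antisymm (Set.iUnion₂_subset fun w hw => hw.2) fun v hv => ?_
  obtain ⟨w, hw, hwS, hvw⟩ := exists_minSync_le (a := (∅, {v})) hN hM hS
    (fun h => by simpa using congrArg Prod.snd h)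
    (fun s => by by_cases h : v ∈ s.2 <;> simp [Prod.le_def, Prod.disjoint_iff, h])
    ⟨Set.empty_subset _, Set.singleton_subset_iff.2 hv⟩
  exact Set.mem_biUnion (x := ⟨w, hw⟩) hwS (hvw.2 rfl)

theorem comp_pre (w : {s : Set T₁ × Set T₂ // MinSync N M s.1 s.2}) :
    (N.comp M).pre w = mU (N.preSet w.1.1) (M.preSet w.1.2) :=
  rfl

theorem comp_post (w : {s : Set T₁ × Set T₂ // MinSync N M s.1 s.2}) :
    (N.comp M).post w = mU (N.postSet w.1.1) (M.postSet w.1.2) :=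
  rfl

theorem MI_comp_minSyncsBelow (hN : N.BoundaryInj) (hM : M.BoundaryInj)
    {S : Set T₁ × Set T₂} (hS : Sync N M S.1 S.2) : (N.comp M).MI (minSyncsBelow N M S) := by
  intro w hw w' hw' hne
  rcases MinSync.eq_or_disjoint hN hM w.2 w'.2 with h | h
  · exact absurd (Subtype.ext h) hne
  obtain ⟨h₁, h₂⟩ := Prod.disjoint_iff.1 h
  rw [← Set.disjoint_iff_inter_eq_empty, comp_pre, comp_pre, comp_post, comp_post,
    mU_union_mU, mU_union_mU, disjoint_mU]
  exact ⟨hS.1.disjoint_preSet_union_postSet hw.1 hw'.1 h₁,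
    hS.2.1.disjoint_preSet_union_postSet hw.2 hw'.2 h₂⟩

section Firing

variable (W : Set {s : Set T₁ × Set T₂ // MinSync N M s.1 s.2})

theorem comp_preSet :
    (N.comp M).preSet W = mU (N.preSet (⋃ w ∈ W, w.1.1)) (M.preSet (⋃ w ∈ W, w.1.2)) := by
  simp only [preSet, comp, mU, Set.biUnion_iUnion, Set.image_iUnion₂, Set.iUnion_union_distrib]

theorem comp_postSet :
    (N.comp M).postSet W = mU (N.postSet (⋃ w ∈ W, w.1.1)) (M.postSet (⋃ w ∈ W, w.1.2)) := by
  simp only [postSet, comp, mU, Set.biUnion_iUnion, Set.image_iUnion₂, Set.iUnion_union_distrib]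

theorem comp_srcSet : (N.comp M).srcSet W = N.srcSet (⋃ w ∈ W, w.1.1) := by
  simp only [srcSet, comp, Set.biUnion_iUnion]

theorem comp_tgtSet : (N.comp M).tgtSet W = M.tgtSet (⋃ w ∈ W, w.1.2) := by
  simp only [tgtSet, comp, Set.biUnion_iUnion]

end Firing

theorem Step.comp (hN : N.BoundaryInj) (hM : M.BoundaryInj) {X X' : Set P} {Y Y' : Set Q}
    {α : Set (Fin k)} {γ : Set (Fin l)} {β : Set (Fin m)}
    (hX : N.Step X α γ X') (hY : M.Step Y γ β Y') :
    (N.comp M).Step (mU X Y) α β (mU X' Y') := by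
  obtain ⟨U, hU, hUpre, hUpost, rfl, rfl, rfl⟩ := hX
  obtain ⟨V, hV, hVpre, hVpost, rfl, hmid, rfl⟩ := hY
  have hS : Sync N M (U, V).1 (U, V).2 := ⟨hU, hV, hmid.symm⟩
  refine ⟨minSyncsBelow N M (U, V), MI_comp_minSyncsBelow hN hM hS, ?_, ?_, ?_, ?_, ?_⟩
  all_goals simp only [comp_preSet, comp_postSet, comp_srcSet, comp_tgtSet,
    biUnion_minSyncsBelow_fst hN hM hS, biUnion_minSyncsBelow_snd hN hM hS]
  · exact mU_subset_mU hUpre hVpre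
  · exact Set.disjoint_iff_inter_eq_empty.1 (disjoint_mU.2
      ⟨Set.disjoint_iff_inter_eq_empty.2 hUpost, Set.disjoint_iff_inter_eq_empty.2 hVpost⟩)
  · rw [mU_sdiff_mU, mU_union_mU]

theorem reflTransGen_epsStep_comp_left (hN : N.BoundaryInj) (hM : M.BoundaryInj)
    {X X' : Set P} (Y : Set Q) (h : Relation.ReflTransGen N.EpsStep X X') :
    Relation.ReflTransGen (N.comp M).EpsStep (mU X Y) (mU X' Y) :=
  h.lift (mU · Y) fun _ _ hX => Step.comp hN hM hX (M.step_empty Y)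

theorem reflTransGen_epsStep_comp_right (hN : N.BoundaryInj) (hM : M.BoundaryInj) (X : Set P)
    {Y Y' : Set Q} (h : Relation.ReflTransGen M.EpsStep Y Y') :
    Relation.ReflTransGen (N.comp M).EpsStep (mU X Y) (mU X Y') :=
  h.lift (mU X ·) fun _ _ hY => Step.comp hN hM (N.step_empty X) hY

end Net

open Net in
/-- weak compositionality, backward direction. -/
theorem weak_compositionality_backward {P Q T₁ T₂ : Type} {k l m : ℕ}
    (N : Net P T₁ k l) (M : Net Q T₂ l m)
    (hN : N.BoundaryInj) (hM : M.BoundaryInj)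
    (X X' : Set P) (Y Y' : Set Q)
    (α : Set (Fin k)) (β : Set (Fin m)) (γ : Set (Fin l))
    (hNw : N.Weak X α γ X') (hMw : M.Weak Y γ β Y') :
    (N.comp M).Weak (mU X Y) α β (mU X' Y') := by
  obtain ⟨X₁, X₂, hX₁, hX, hX₂⟩ := hNw
  obtain ⟨Y₁, Y₂, hY₁, hY, hY₂⟩ := hMw
  exact ⟨mU X₁ Y₁, mU X₂ Y₂,
    (reflTransGen_epsStep_comp_left hN hM Y hX₁).trans
      (reflTransGen_epsStep_comp_right hN hM X₁ hY₁),
    Step.comp hN hM hX hY,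
    (reflTransGen_epsStep_comp_left hN hM Y₂ hX₂).trans
      (reflTransGen_epsStep_comp_right hN hM X' hY₂)⟩
end

section
/- Compositionality for the tensor (parallel) operation: for nets M : k→l and N : m→n, markings X, X' ⊆ P_M, Y, Y' ⊆ P_N, the tensor net M⊗N has a step transition (X + Y) --αγ/βδ--> (X' + Y') if and only if X --α/β--> X' in M and Y --γ/δ--> Y' in N, where αγ denotes concatenation of strings α ∈ {0,1}^k and γ ∈ {0,1}^m. -/
/-!
The places, transitions and boundary ports of `M ⊗ N` are disjoint unions of those of `M` and `N`,
and `Set.sumEquiv : Set (α ⊕ β) ≃o Set α × Set β` commutes with all the Boolean operations in the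
step rule (on boundaries through `finSumFinEquiv`). So a set `U` of transitions of `M ⊗ N` fires
iff its restrictions to `M` and to `N` fire, transitions of different components being
independent because their places lie in different summands.
-/

section

variable {T₁ T₂ A B C : Type} {k m : ℕ}

theorem biUnion_sumElim_image (U : Set (T₁ ⊕ T₂)) (F : T₁ → Set A) (G : T₂ → Set B)
    (f : A → C) (g : B → C) :
    ⋃ t ∈ U, Sum.elim (fun t => f '' F t) (fun t => g '' G t) t =
      f '' (⋃ t ∈ Sum.inl ⁻¹' U, F t) ∪ g '' ⋃ t ∈ Sum.inr ⁻¹' U, G t := by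
  ext c
  simp only [Set.mem_iUnion, Set.mem_union, Set.image_iUnion, Sum.exists, Set.mem_preimage,
    Sum.elim_inl, Sum.elim_inr, exists_prop]

theorem Fin.castAdd_image_union_natAdd_image (α : Set (Fin k)) (γ : Set (Fin m)) :
    Fin.castAdd m '' α ∪ Fin.natAdd k '' γ = finSumFinEquiv '' Set.sumEquiv.symm (α, γ) := by
  simp [Set.image_union, Set.image_image]

theorem Fin.castAdd_image_union_natAdd_image_inj {α α' : Set (Fin k)} {γ γ' : Set (Fin m)} :
    Fin.castAdd m '' α ∪ Fin.natAdd k '' γ = Fin.castAdd m '' α' ∪ Fin.natAdd k '' γ' ↔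
      α = α' ∧ γ = γ' := by
  simp only [Fin.castAdd_image_union_natAdd_image, finSumFinEquiv.injective.image_injective.eq_iff,
    Set.sumEquiv.symm.injective.eq_iff, Prod.mk_inj]

end

namespace Net

variable {P Q T₁ T₂ : Type} {k l m n : ℕ}

section DisjointUnion

variable {X X' : Set P} {Y Y' : Set Q}

theorem preimage_inl_mU (X : Set P) (Y : Set Q) : Sum.inl ⁻¹' mU X Y = X := by
  simp [mU, Set.preimage_image_eq _ Sum.inl_injective]

theorem preimage_inr_mU (X : Set P) (Y : Set Q) : Sum.inr ⁻¹' mU X Y = Y := by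
  simp [mU, Set.preimage_image_eq _ Sum.inr_injective]

theorem mU_subset_mU_iff : mU X Y ⊆ mU X' Y' ↔ X ⊆ X' ∧ Y ⊆ Y' :=
  Set.sumEquiv.symm.le_iff_le.trans Prod.mk_le_mk

theorem mU_inj : mU X Y = mU X' Y' ↔ X = X' ∧ Y = Y' :=
  Set.sumEquiv.symm.injective.eq_iff.trans Prod.mk_inj

theorem mU_eq_empty_iff : mU X Y = ∅ ↔ X = ∅ ∧ Y = ∅ := by
  simp [mU]

theorem mU_union_mU_s8 : mU X Y ∪ mU X' Y' = mU (X ∪ X') (Y ∪ Y') := by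
  ext (p | q) <;> simp [mU]

theorem mU_inter_mU : mU X Y ∩ mU X' Y' = mU (X ∩ X') (Y ∩ Y') := by
  ext (p | q) <;> simp [mU]

theorem mU_diff_mU : mU X Y \ mU X' Y' = mU (X \ X') (Y \ Y') := by
  ext (p | q) <;> simp [mU]

end DisjointUnion

def StepVia (N : Net P T₁ k l) (U : Set T₁) (X : Set P) (α : Set (Fin k)) (β : Set (Fin l))
    (X' : Set P) : Prop :=
  N.MI U ∧ N.preSet U ⊆ X ∧ N.postSet U ∩ X = ∅ ∧
    X' = (X \ N.preSet U) ∪ N.postSet U ∧ N.srcSet U = α ∧ N.tgtSet U = β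

theorem step_iff_exists_stepVia (N : Net P T₁ k l) (X : Set P) (α : Set (Fin k))
    (β : Set (Fin l)) (X' : Set P) : N.Step X α β X' ↔ ∃ U, N.StepVia U X α β X' :=
  Iff.rfl

section Tensor

variable (M : Net P T₁ k l) (N : Net Q T₂ m n) (U : Set (T₁ ⊕ T₂))

theorem tensor_preSet :
    (M.tensor N).preSet U = mU (M.preSet (Sum.inl ⁻¹' U)) (N.preSet (Sum.inr ⁻¹' U)) :=
  biUnion_sumElim_image U M.pre N.pre Sum.inl Sum.inr

theorem tensor_postSet :
    (M.tensor N).postSet U = mU (M.postSet (Sum.inl ⁻¹' U)) (N.postSet (Sum.inr ⁻¹' U)) :=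
  biUnion_sumElim_image U M.post N.post Sum.inl Sum.inr

theorem tensor_srcSet :
    (M.tensor N).srcSet U =
      Fin.castAdd m '' M.srcSet (Sum.inl ⁻¹' U) ∪ Fin.natAdd k '' N.srcSet (Sum.inr ⁻¹' U) :=
  biUnion_sumElim_image U M.src N.src _ _

theorem tensor_tgtSet :
    (M.tensor N).tgtSet U =
      Fin.castAdd n '' M.tgtSet (Sum.inl ⁻¹' U) ∪ Fin.natAdd l '' N.tgtSet (Sum.inr ⁻¹' U) :=
  biUnion_sumElim_image U M.tgt N.tgt _ _

theorem tensor_pre_union_post (t : T₁ ⊕ T₂) :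
    (M.tensor N).pre t ∪ (M.tensor N).post t =
      t.elim (fun t => mU (M.pre t ∪ M.post t) ∅) (fun t => mU ∅ (N.pre t ∪ N.post t)) := by
  cases t <;> simp [tensor, mU, Set.image_union]

theorem tensor_MI_iff :
    (M.tensor N).MI U ↔ M.MI (Sum.inl ⁻¹' U) ∧ N.MI (Sum.inr ⁻¹' U) := by
  simp [MI, tensor_pre_union_post, mU_inter_mU, mU_eq_empty_iff]

theorem tensor_stepVia_iff (X X' : Set P) (Y Y' : Set Q)
    (α : Set (Fin k)) (β : Set (Fin l)) (γ : Set (Fin m)) (δ : Set (Fin n)) :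
    (M.tensor N).StepVia U (mU X Y) (Fin.castAdd m '' α ∪ Fin.natAdd k '' γ)
        (Fin.castAdd n '' β ∪ Fin.natAdd l '' δ) (mU X' Y') ↔
      M.StepVia (Sum.inl ⁻¹' U) X α β X' ∧ N.StepVia (Sum.inr ⁻¹' U) Y γ δ Y' := by
  simp only [StepVia, tensor_MI_iff, tensor_preSet, tensor_postSet, tensor_srcSet,
    tensor_tgtSet, mU_subset_mU_iff, mU_inter_mU, mU_eq_empty_iff, mU_diff_mU, mU_union_mU_s8,
    mU_inj, Fin.castAdd_image_union_natAdd_image_inj]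
  tauto

end Tensor

end Net

open Net in
/-- compositionality of the step semantics for the tensor `M ⊗ N`. -/
theorem tensor_compositionality {P Q T₁ T₂ : Type} {k l m n : ℕ}
    (M : Net P T₁ k l) (N : Net Q T₂ m n)
    (X X' : Set P) (Y Y' : Set Q)
    (α : Set (Fin k)) (β : Set (Fin l)) (γ : Set (Fin m)) (δ : Set (Fin n)) :
    (M.tensor N).Step (mU X Y)
        (Fin.castAdd m '' α ∪ Fin.natAdd k '' γ)
        (Fin.castAdd n '' β ∪ Fin.natAdd l '' δ) (mU X' Y') ↔
      M.Step X α β X' ∧ N.Step Y γ δ Y' := by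
  simp only [step_iff_exists_stepVia, tensor_stepVia_iff]
  constructor
  · rintro ⟨U, hM, hN⟩
    exact ⟨⟨_, hM⟩, ⟨_, hN⟩⟩
  · rintro ⟨⟨U₁, hM⟩, ⟨U₂, hN⟩⟩
    exact ⟨mU U₁ U₂, by rwa [preimage_inl_mU], by rwa [preimage_inr_mU]⟩
end
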